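/- For a nonzero n-form β on a finite-dimensional vector space F, dim F = dim S_β + dim ker β, where S_β is the support of β and ker β its kernel under contraction. -/

import Mathlib

open Module Function

variable {K : Type*} [Field K] {W : Type*} [AddCommGroup W] [Module K W]

/-- The wedge product `α 0 ∧ ⋯ ∧ α (n-1)` of `n` linear forms, as an alternating `n`-form. -/
noncomputable def detForm (n : ℕ) (α : Fin n → Module.Dual K W) : W [⋀^Fin n]→ₗ[K] K :=
  (Matrix.detRowAlternating (R := K) (n := Fin n)).compLinearMap (LinearMap.pi α)

/-- The kernel of an alternating form under interior contraction:
`v ∈ kerForm β ↔ i_v β = 0`. -/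
def kerForm {n : ℕ} (β : W [⋀^Fin n]→ₗ[K] K) : Submodule K W where
  carrier := {v | ∀ w : Fin n → W, (∃ i, w i = v) → β w = 0}
  zero_mem' := by
    rintro w ⟨i, hi⟩
    have h : w = Function.update w i (0 : W) := by rw [← hi, Function.update_eq_self]
    rw [h]
    simp
  add_mem' := by
    rintro a b ha hb w ⟨i, hi⟩
    have h : w = Function.update w i (a + b) := by rw [← hi, Function.update_eq_self]
    rw [h, β.map_update_add]
    rw [ha _ ⟨i, by simp⟩, hb _ ⟨i, by simp⟩, add_zero]
  smul_mem' := by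
    rintro c a ha w ⟨i, hi⟩
    have h : w = Function.update w i (c • a) := by rw [← hi, Function.update_eq_self]
    rw [h, β.map_update_smul, ha _ ⟨i, by simp⟩, smul_zero]

/-- The support of an alternating `n`-form `β`: the smallest subspace `S ⊆ W*` such that
`β ∈ Λⁿ S` (equivalently, `β` is a linear combination of wedges of elements of `S`). -/
noncomputable def supp {n : ℕ} (β : W [⋀^Fin n]→ₗ[K] K) : Submodule K (Module.Dual K W) :=
  sInf {S | β ∈ Submodule.span K
    {γ | ∃ α : Fin n → Module.Dual K W, (∀ i, α i ∈ S) ∧ γ = detForm n α}}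

/-- `L` is `k`-isotropic w.r.t. `ω`: every contraction of `ω` with `k+1` vectors of `L`
vanishes. -/
def kIsotropic {n : ℕ} (ω : W [⋀^Fin n]→ₗ[K] K) (k : ℕ) (L : Submodule K W) : Prop :=
  ∀ v : Fin n → W, (∀ i : Fin n, (i : ℕ) ≤ k → v i ∈ L) → ω v = 0

/-- `L` is maximal (1-)isotropic w.r.t. `ω`. -/
def MaximalIsotropic {n : ℕ} (ω : W [⋀^Fin n]→ₗ[K] K) (L : Submodule K W) : Prop :=
  kIsotropic ω 1 L ∧ ∀ L' : Submodule K W, kIsotropic ω 1 L' → L ≤ L' → L' = L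

/-- `v` is a decomposable vector w.r.t. the `(n+1)`-form `ω`, i.e. `i_v ω` is a
decomposable `n`-form. -/
def DecompVec {n : ℕ} (ω : W [⋀^Fin (n + 1)]→ₗ[K] K) (v : W) : Prop :=
  ∃ α : Fin n → Module.Dual K W, ω.curryLeft v = detForm n α

/-- `L` is decomposable w.r.t. `ω`: it has a basis of decomposable vectors. -/
def DecompSub {n : ℕ} (ω : W [⋀^Fin (n + 1)]→ₗ[K] K) (L : Submodule K W) : Prop :=
  ∃ (m : ℕ) (b : Fin m → W), (∀ i, b i ∈ L) ∧ LinearIndependent K b ∧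
    Submodule.span K (Set.range b) = L ∧ ∀ i, DecompVec ω (b i)

lemma detForm_apply (n : ℕ) (α : Fin n → Module.Dual K W) (w : Fin n → W) :
    detForm n α w = Matrix.det (Matrix.of fun i j => α j (w i)) := by
  rfl


lemma altmap_sum_apply {n : ℕ} {α : Type*} (f : α → (W [⋀^Fin n]→ₗ[K] K)) (s : Finset α)
    (m : Fin n → W) : (∑ i ∈ s, f i) m = ∑ i ∈ s, f i m := by
  induction s using Finset.cons_induction with
  | empty => rfl
  | cons a s ha ih => rw [Finset.sum_cons, Finset.sum_cons, AlternatingMap.add_apply, ih]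

lemma detForm_span {ι : Type*} [Fintype ι] [LinearOrder ι] (b : Basis ι K W) {n : ℕ}
    (β : W [⋀^Fin n]→ₗ[K] K) :
    β = ∑ s : {s : Finset ι // s.card = n},
      β (b ∘ (s.1.orderEmbOfFin s.2)) • detForm n (b.dualBasis ∘ (s.1.orderEmbOfFin s.2)) := by
  apply Basis.ext_alternating b
  intro v hv
  rw [altmap_sum_apply]
  have hcard : (Finset.image v Finset.univ).card = n := by
    rw [Finset.card_image_of_injective _ hv, Finset.card_univ, Fintype.card_fin]
  rw [Finset.sum_eq_single (⟨Finset.image v Finset.univ, hcard⟩ :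
      {s : Finset ι // s.card = n})]
  · set s : Finset ι := Finset.image v Finset.univ with hs
    set σ := s.orderEmbOfFin hcard with hσdef
    have hσ : Function.Injective σ := σ.injective
    have hrange : Set.range v = Set.range σ := by
      rw [Finset.range_orderEmbOfFin, hs]
      ext x; simp
    -- permutation
    let π : Equiv.Perm (Fin n) :=
      ((Equiv.ofInjective v hv).trans (Equiv.setCongr hrange)).trans
        (Equiv.ofInjective σ hσ).symm
    have hπ : ∀ i, σ (π i) = v i := by
      intro i
      show σ ((Equiv.ofInjective σ hσ).symm ⟨v i, _⟩) = v i
      exact congrArg Subtype.val ((Equiv.ofInjective σ hσ).apply_symm_apply ⟨v i, _⟩)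
    have hβ : β (fun i => b (v i)) = Equiv.Perm.sign π • β (fun i => b (σ i)) := by
      have := β.map_perm (fun i => b (σ i)) π
      simp only [Function.comp_def] at this
      rw [← this]
      congr 1
      funext i
      show b (v i) = b (σ (π i))
      rw [hπ i]
    have hdet : detForm n (b.dualBasis ∘ σ) (b ∘ v) = ((Equiv.Perm.sign π : ℤ) : K) := by
      rw [detForm_apply]
      have : (Matrix.of fun i j => (b.dualBasis ∘ σ) j ((b ∘ v) i)) =
          (π.permMatrix K) := by
        ext i j
        simp only [Matrix.of_apply, Function.comp_apply, Basis.dualBasis_apply_self,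
          Equiv.Perm.permMatrix, PEquiv.toMatrix_apply, Equiv.toPEquiv_apply,
          Option.mem_def, Option.some.injEq]
        rw [← hπ i]
        by_cases h : π i = j
        · simp [h]
        · rw [if_neg h, if_neg]
          intro hcontra
          exact h (hσ hcontra)
      rw [this, Matrix.det_permutation]
    rw [AlternatingMap.smul_apply]
    show β (fun i => b (v i)) = _ • detForm n (b.dualBasis ∘ σ) (b ∘ v)
    rw [hdet, hβ]
    rw [Units.smul_def, zsmul_eq_mul, smul_eq_mul, mul_comm]
    rfl
  · intro s _ hne
    obtain ⟨i, hi⟩ : ∃ i, v i ∉ s.1 := by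
      by_contra h
      push_neg at h
      apply hne
      ext1
      symm
      apply Finset.eq_of_subset_of_card_le
      · intro x hx
        simp only [Finset.mem_image, Finset.mem_univ] at hx
        obtain ⟨j, -, rfl⟩ := hx
        exact h j
      · rw [hcard]; exact s.2.le
    rw [AlternatingMap.smul_apply]
    have : detForm n (b.dualBasis ∘ s.1.orderEmbOfFin s.2) (b ∘ v) = 0 := by
      rw [detForm_apply]
      apply Matrix.det_eq_zero_of_row_eq_zero i
      intro j
      show b.dualBasis ((s.1.orderEmbOfFin s.2) j) (b (v i)) = 0
      rw [Basis.dualBasis_apply_self, if_neg]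
      intro h
      exact hi (h ▸ s.1.orderEmbOfFin_mem s.2 j)
    show _ • detForm n (b.dualBasis ∘ s.1.orderEmbOfFin s.2) (b ∘ v) = 0
    rw [this, smul_zero]
  · intro h
    exact absurd (Finset.mem_univ _) h

set_option maxHeartbeats 2000000 in
lemma mem_span_detForm [FiniteDimensional K W] {n : ℕ} (β : W [⋀^Fin n]→ₗ[K] K) :
    β ∈ Submodule.span K {γ | ∃ α : Fin n → Module.Dual K W,
      (∀ i, α i ∈ (kerForm β).dualAnnihilator) ∧ γ = detForm n α} := by
  obtain ⟨C, hC⟩ := Submodule.exists_isCompl (kerForm β)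
  let bκ := finBasis K (kerForm β)
  let bC := finBasis K C
  let b0 : Basis (Fin (finrank K (kerForm β)) ⊕ Fin (finrank K C)) K W :=
    (bκ.prod bC).map (Submodule.prodEquivOfIsCompl _ _ hC)
  let b := b0.reindex finSumFinEquiv
  have hinl : ∀ i, b (finSumFinEquiv (Sum.inl i)) = (bκ i : W) := by
    intro i
    simp only [b, Basis.reindex_apply, Equiv.symm_apply_apply, b0, Basis.map_apply]
    rw [Basis.prod_apply]
    simp [Submodule.coe_prodEquivOfIsCompl']
  have hspan : Submodule.span K (Set.range fun i => b (finSumFinEquiv (Sum.inl i)))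
      = kerForm β := by
    have h0 : (fun i => b (finSumFinEquiv (Sum.inl i))) = (kerForm β).subtype ∘ bκ :=
      funext fun i => hinl i
    rw [h0, Set.range_comp, Submodule.span_image, bκ.span_eq, Submodule.map_subtype_top]
  have hrep : ∀ x ∈ kerForm β, ∀ j, b.repr x (finSumFinEquiv (Sum.inr j)) = 0 := by
    intro x hx j
    rw [← hspan] at hx
    induction hx using Submodule.span_induction with
    | mem y hy =>
      obtain ⟨i, rfl⟩ := hy
      rw [b.repr_self, Finsupp.single_eq_of_ne]
      exact finSumFinEquiv.injective.ne (by simp)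
    | zero => rw [map_zero]; rfl
    | add y z _ _ hy hz => rw [map_add, Finsupp.add_apply, hy, hz, add_zero]
    | smul c y _ hy => rw [map_smul, Finsupp.smul_apply, hy, smul_zero]
  clear_value b b0 bκ bC
  set A := (kerForm β).dualAnnihilator with hA
  rw [detForm_span b β]
  apply Submodule.sum_mem
  intro s _
  set σ := s.1.orderEmbOfFin s.2 with hσdef
  by_cases hcase : ∀ i : Fin n, ∃ j, σ i = finSumFinEquiv (Sum.inr j)
  · refine Submodule.smul_mem _ _ (Submodule.subset_span ⟨⇑b.dualBasis ∘ ⇑σ, fun i => ?_, by congr!⟩)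
    obtain ⟨j, hj⟩ := hcase i
    rw [hA, Submodule.mem_dualAnnihilator]
    intro x hx
    show b.dualBasis (σ i) x = 0
    rw [hj, Basis.dualBasis_apply, hrep x hx j]
  · push_neg at hcase
    obtain ⟨i, hi⟩ := hcase
    have hcoef : β (⇑b ∘ ⇑σ) = 0 := by
      obtain ⟨i0, hi0⟩ : ∃ i0, σ i = finSumFinEquiv (Sum.inl i0) := by
        rcases h' : finSumFinEquiv.symm (σ i) with i0 | j
        · exact ⟨i0, by rw [← h', Equiv.apply_symm_apply]⟩
        · exact absurd (by rw [← h', Equiv.apply_symm_apply]) (hi j)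
      have hmem : b (σ i) ∈ kerForm β := by
        rw [hi0, hinl]
        exact (bκ i0).2
      exact hmem (⇑b ∘ ⇑σ) ⟨i, rfl⟩
    rw [hcoef, zero_smul]
    exact Submodule.zero_mem _

lemma supp_eq [FiniteDimensional K W] {n : ℕ} (β : W [⋀^Fin n]→ₗ[K] K) :
    supp β = (kerForm β).dualAnnihilator := by
  apply le_antisymm
  · exact sInf_le (mem_span_detForm β)
  · apply le_sInf
    intro S hS
    have h1 : S.dualCoannihilator ≤ kerForm β := by
      intro v hv
      rw [Submodule.mem_dualCoannihilator] at hv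
      rintro w ⟨i, hi⟩
      induction hS using Submodule.span_induction with
      | mem γ hγ =>
        obtain ⟨α, hα, rfl⟩ := hγ
        rw [detForm_apply]
        apply Matrix.det_eq_zero_of_row_eq_zero i
        intro j
        show α j (w i) = 0
        rw [hi]
        exact hv (α j) (hα j)
      | zero => rfl
      | add γ δ _ _ hγ hδ => rw [AlternatingMap.add_apply, hγ, hδ, add_zero]
      | smul c γ _ hγ => rw [AlternatingMap.smul_apply, hγ, smul_zero]
    calc (kerForm β).dualAnnihilator
        ≤ S.dualCoannihilator.dualAnnihilator := Submodule.dualAnnihilator_anti h1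
      _ = S := Subspace.dualCoannihilator_dualAnnihilator_eq

/-- `dim F = dim S_β + dim ker β` for a nonzero `n`-form `β`. -/
theorem stmt1 [FiniteDimensional K W] {n : ℕ} (β : W [⋀^Fin n]→ₗ[K] K) (hβ : β ≠ 0) :
    finrank K W = finrank K (supp β) + finrank K (kerForm β) := by
  rw [supp_eq]
  have h1 := Submodule.finrank_quotient_add_finrank (kerForm β)
  have h2 : finrank K (W ⧸ kerForm β) = finrank K (kerForm β).dualAnnihilator :=
    LinearEquiv.finrank_eq (Subspace.quotEquivAnnihilator (kerForm β))
  omega
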